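/- Let P be a finite bounded poset with a CL-labeling λ. Then the maximal chain descent order C(P,λ) has a unique minimal element, namely the unique ascending maximal chain of P with respect to λ: the unique ascending maximal chain m₀ satisfies m₀ ≤ m in C(P,λ) for every maximal chain m of P. -/

import Mathlib

/-- A maximal chain of a bounded poset `P`, recorded as a saturated chain
(a list of elements whose consecutive entries are covers) from `⊥` to `⊤`. -/
structure MaxChain (P : Type*) [PartialOrder P] [BoundedOrder P] where
  elems : List P
  chain' : elems.Chain' (· ⋖ ·)
  head_bot : elems.head? = some ⊥
  last_top : elems.getLast? = some ⊤

variable {P : Type*} [PartialOrder P] [BoundedOrder P] [DecidableEq P]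
variable {Λ : Type*} [PartialOrder Λ]
set_option linter.unusedSectionVars false

/-- `lab` is a chain-edge labeling: the label of edge `j` (the edge between
positions `j` and `j+1` of the chain, `0`-indexed) depends only on the
bottom part of the chain below that edge. -/
def IsChainEdgeLabeling (lab : MaxChain P → ℕ → Λ) : Prop :=
  ∀ m m' : MaxChain P, ∀ i : ℕ,
    m.elems.take (i + 1) = m'.elems.take (i + 1) → ∀ j, j < i → lab m j = lab m' j

/-- `r` is a root: a saturated chain from `⊥` to `x`. -/
def IsRootTo (r : List P) (x : P) : Prop :=
  r.Chain' (· ⋖ ·) ∧ r.head? = some (⊥ : P) ∧ r.getLast? = some x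

/-- `c` is a saturated chain from `x` to `y`. -/
def IsSatChain (c : List P) (x y : P) : Prop :=
  c.Chain' (· ⋖ ·) ∧ c.head? = some x ∧ c.getLast? = some y

/-- The maximal chain `m` lies in the rooted interval `[x,y]_r`, i.e. it begins
with the root `r` (whose last entry is `x`) and passes through `y`. -/
def InRooted (m : MaxChain P) (r : List P) (y : P) : Prop :=
  m.elems.take r.length = r ∧ y ∈ m.elems

/-- The labels of `m` weakly ascend along the edges `i, i+1, …, j-1`
(the edges of the restriction of `m` between positions `i` and `j`). -/
def RestrAscending (lab : MaxChain P → ℕ → Λ) (m : MaxChain P) (i j : ℕ) : Prop :=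
  ∀ k, i ≤ k → k + 2 ≤ j → lab m k ≤ lab m (k + 1)

/-- The restriction of the maximal chain `m` to the rooted interval `[x,y]_r`,
where `x` is the top of the root `r`. -/
def restrictChain (m : MaxChain P) (r : List P) (y : P) : List P :=
  (m.elems.take (m.elems.idxOf y + 1)).drop (r.length - 1)

/-- The label sequence of `m` along edges `i, i+1, …, j-1`. -/
def restrLabels (lab : MaxChain P → ℕ → Λ) (m : MaxChain P) (i j : ℕ) : List Λ :=
  (List.range (j - i)).map fun k => lab m (i + k)

/-- The CL condition for the rooted interval with root `r` and top `y`: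
there is an ascending maximal chain of the rooted interval, any two ascending
ones coincide, and the ascending one lexicographically strictly precedes every
other maximal chain of the rooted interval. -/
def CLAt (lab : MaxChain P → ℕ → Λ) (r : List P) (y : P) : Prop :=
  (∃ m : MaxChain P, InRooted m r y ∧
      RestrAscending lab m (r.length - 1) (m.elems.idxOf y)) ∧
  (∀ m m' : MaxChain P, InRooted m r y → InRooted m' r y →
      RestrAscending lab m (r.length - 1) (m.elems.idxOf y) →
      RestrAscending lab m' (r.length - 1) (m'.elems.idxOf y) →
      restrictChain m r y = restrictChain m' r y) ∧
  (∀ m m' : MaxChain P, InRooted m r y → InRooted m' r y →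
      RestrAscending lab m (r.length - 1) (m.elems.idxOf y) →
      restrictChain m r y ≠ restrictChain m' r y →
      List.Lex (· < ·) (restrLabels lab m (r.length - 1) (m.elems.idxOf y))
        (restrLabels lab m' (r.length - 1) (m'.elems.idxOf y)))

/-- `lab` is a CL-labeling: it is a chain-edge labeling and every rooted
interval has a unique ascending maximal chain which lexicographically strictly
precedes all other maximal chains of that rooted interval. -/
def IsCLLabeling (lab : MaxChain P → ℕ → Λ) : Prop :=
  IsChainEdgeLabeling lab ∧
  ∀ (r : List P) (x y : P), IsRootTo r x → x < y → CLAt lab r y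

/-- `m` increases by a polygon move to `m'`: they differ by a polygon over some
interval `[x,y]` (with `m' ∩ (x,y) = {w}` a single new element), the part of `m`
in `[x,y]` is ascending (hence, for a CL-labeling, it is the unique ascending
chain of the rooted interval), and `x ⋖ w ⋖ y` is a descent at `w`. -/
def PolygonMove (lab : MaxChain P → ℕ → Λ) (m m' : MaxChain P) : Prop :=
  ∃ (a c b : List P) (x w y : P),
    m.elems = a ++ x :: (c ++ y :: b) ∧
    m'.elems = a ++ x :: w :: y :: b ∧
    c ≠ [] ∧ w ∉ c ∧
    RestrAscending lab m a.length (a.length + c.length + 1) ∧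
    ¬ lab m' a.length ≤ lab m' (a.length + 1)

/-- The maximal chain descent order `C(P,λ)`: the reflexive–transitive closure
of increase by polygon moves. -/
def CDLe (lab : MaxChain P → ℕ → Λ) (m m' : MaxChain P) : Prop :=
  Relation.ReflTransGen (PolygonMove lab) m m'

/-- Strict order of the maximal chain descent order. -/
def CDLt (lab : MaxChain P → ℕ → Λ) (m m' : MaxChain P) : Prop :=
  CDLe lab m m' ∧ m ≠ m'

/-- `m'` covers `m` in the maximal chain descent order. -/
def CDCovBy (lab : MaxChain P → ℕ → Λ) (m m' : MaxChain P) : Prop :=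
  CDLt lab m m' ∧ ∀ z : MaxChain P, CDLt lab m z → ¬ CDLt lab z m'

/-- `lab` is polygon complete: every polygon move gives a cover relation. -/
def PolygonComplete (lab : MaxChain P → ℕ → Λ) : Prop :=
  ∀ m m' : MaxChain P, PolygonMove lab m m' → CDCovBy lab m m'

/-- `m` has a descent at its (interior) position `i`. -/
def DescentAt (lab : MaxChain P → ℕ → Λ) (m : MaxChain P) (i : ℕ) : Prop :=
  0 < i ∧ i + 1 < m.elems.length ∧ ¬ lab m (i - 1) ≤ lab m i

/-- `m` has a descent at its interior element `z`. -/
def DescentElem (lab : MaxChain P → ℕ → Λ) (m : MaxChain P) (z : P) : Prop :=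
  ∃ i : ℕ, m.elems[i]? = some z ∧ DescentAt lab m i

/-- `m` has a descending label sequence: a descent at every interior element. -/
def DescendingMC (lab : MaxChain P → ℕ → Λ) (m : MaxChain P) : Prop :=
  ∀ i : ℕ, 0 < i → i + 1 < m.elems.length → ¬ lab m (i - 1) ≤ lab m i

/-- `m` has an ascending (weakly increasing) label sequence. -/
def AscendingMC (lab : MaxChain P → ℕ → Λ) (m : MaxChain P) : Prop :=
  ∀ i : ℕ, i + 3 ≤ m.elems.length → lab m i ≤ lab m (i + 1)


section Aux

theorem mc_ext {m m' : MaxChain P} (h : m.elems = m'.elems) : m = m' := by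
  cases m; cases m'; simpa using h

theorem mc_ne_nil (m : MaxChain P) : m.elems ≠ [] := by
  intro h
  have hb := m.head_bot
  rw [h] at hb
  simp at hb

theorem mc_len_pos (m : MaxChain P) : 0 < m.elems.length :=
  List.length_pos_iff.mpr (mc_ne_nil m)

theorem mc_pairwise (m : MaxChain P) : m.elems.Pairwise (· < ·) :=
  List.isChain_iff_pairwise.mp (m.chain'.imp (fun _ _ h => h.lt))

theorem mc_nodup (m : MaxChain P) : m.elems.Nodup :=
  (mc_pairwise m).imp ne_of_lt

theorem mc_cov (m : MaxChain P) {i : ℕ} (h : i + 1 < m.elems.length) :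
    m.elems[i] ⋖ m.elems[i+1] := by
  have := List.isChain_iff_getElem.mp m.chain' i (by omega)
  simpa using this

theorem mc_lt (m : MaxChain P) {i j : ℕ} (hij : i < j) (hj : j < m.elems.length) :
    m.elems[i]'(lt_trans hij hj) < m.elems[j] :=
  List.pairwise_iff_getElem.mp (mc_pairwise m) i j _ hj hij

theorem mc_getElem_zero (m : MaxChain P) (h : 0 < m.elems.length) : m.elems[0] = ⊥ := by
  have hb := m.head_bot
  rw [List.head?_eq_getElem?, List.getElem?_eq_getElem h] at hb
  exact Option.some_injective _ hb

theorem mc_getElem_last (m : MaxChain P) :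
    m.elems[m.elems.length - 1]'(by have := mc_len_pos m; omega) = ⊤ := by
  have hb := m.last_top
  rw [List.getLast?_eq_getElem?,
    List.getElem?_eq_getElem (show m.elems.length - 1 < m.elems.length by
      have := mc_len_pos m; omega)] at hb
  exact Option.some_injective _ hb

theorem mc_indexOf (m : MaxChain P) {i : ℕ} (h : i < m.elems.length) :
    m.elems.idxOf (m.elems[i]) = i := by
  have hmem : m.elems[i] ∈ m.elems := List.getElem_mem h
  have hlt := List.idxOf_lt_length_iff.mpr hmem
  have h2 := List.getElem_idxOf hlt
  exact (mc_nodup m).getElem_inj_iff.mp h2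

theorem lexLt_trans {α : Type*} [PartialOrder α] :
    ∀ {l₁ l₂ l₃ : List α}, List.Lex (· < ·) l₁ l₂ → List.Lex (· < ·) l₂ l₃ →
      List.Lex (· < ·) l₁ l₃ := by
  intro l₁ l₂ l₃ h1 h2
  induction h1 generalizing l₃ with
  | nil =>
    cases h2 with
    | cons _ => exact List.Lex.nil
    | rel _ => exact List.Lex.nil
  | cons h ih =>
    cases h2 with
    | cons h' => exact List.Lex.cons (ih h')
    | rel hr => exact List.Lex.rel hr
  | rel hab =>
    cases h2 with
    | cons _ => exact List.Lex.rel hab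
    | rel hbc => exact List.Lex.rel (hab.trans hbc)

theorem lexLt_irrefl {α : Type*} [PartialOrder α] :
    ∀ (l : List α), ¬ List.Lex (· < ·) l l
  | [], h => by cases h
  | a :: t, h => by
    cases h with
    | cons h => exact lexLt_irrefl t h
    | rel h => exact lt_irrefl _ h

theorem lex_append_left {α : Type*} {r : α → α → Prop} {l₁ l₂ : List α} (p : List α)
    (h : List.Lex r l₁ l₂) : List.Lex r (p ++ l₁) (p ++ l₂) := by
  induction p with
  | nil => exact h
  | cons a p ih => exact List.Lex.cons ih

theorem lex_append_of_length_le {α : Type*} {r : α → α → Prop} :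
    ∀ {l₁ l₂ : List α}, List.Lex r l₁ l₂ → l₂.length ≤ l₁.length →
    ∀ (u v : List α), List.Lex r (l₁ ++ u) (l₂ ++ v) := by
  intro l₁ l₂ h
  induction h with
  | nil => intro hl; simp at hl
  | cons h ih => intro hl u v; exact List.Lex.cons (ih (by simpa using hl) u v)
  | rel h => intro _ u v; exact List.Lex.rel h

theorem mc_finite [Fintype P] : Finite (MaxChain P) := by
  have hf : {l : List P | l.length ≤ Fintype.card P}.Finite := List.finite_length_le P _
  haveI := hf.to_subtype
  exact Finite.of_injective
    (fun m : MaxChain P =>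
      (⟨m.elems, (mc_nodup m).length_le_card⟩ : {l : List P | l.length ≤ Fintype.card P}))
    (fun m m' h => mc_ext (by simpa using congrArg Subtype.val h))

/-- The full label sequence of a maximal chain. -/
def mcLabels (lab : MaxChain P → ℕ → Λ) (m : MaxChain P) : List Λ :=
  (List.range (m.elems.length - 1)).map (lab m)

theorem map_range_split {α : Type*} (f : ℕ → α) (i s t : ℕ) :
    (List.range (i + s + t)).map f =
      (List.range i).map f ++ ((List.range s).map (fun k => f (i + k))
        ++ (List.range t).map (fun k => f (i + s + k))) := by
  rw [List.range_add, List.range_add]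
  simp [List.map_map, Function.comp_def]

theorem mc_eq_of_bot_eq_top (hbt : (⊥ : P) = ⊤) (m : MaxChain P) : m.elems = [⊥] := by
  have h0 := mc_len_pos m
  have hlen : m.elems.length = 1 := by
    by_contra h
    have h2 : 0 < m.elems.length - 1 := by omega
    have h3 := mc_lt m h2 (show m.elems.length - 1 < m.elems.length by omega)
    rw [mc_getElem_zero m h0, mc_getElem_last m, hbt] at h3
    exact lt_irrefl _ h3
  obtain ⟨w, hw⟩ := List.length_eq_one_iff.mp hlen
  have hh := m.head_bot
  rw [hw] at hh
  simp at hh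
  rw [hw, hh]

theorem mc_indexOf_top (m : MaxChain P) : m.elems.idxOf ⊤ = m.elems.length - 1 := by
  conv_lhs => rw [← mc_getElem_last m]
  exact mc_indexOf m _

theorem mc_inRooted_bot_top (m : MaxChain P) : InRooted m [⊥] (⊤ : P) := by
  constructor
  · have h0 := mc_len_pos m
    cases h : m.elems with
    | nil => exact absurd h (mc_ne_nil m)
    | cons u t =>
      have hb := m.head_bot
      rw [h] at hb
      simp at hb
      simp [h, hb]
  · have := mc_getElem_last m
    exact this ▸ List.getElem_mem _

theorem restrictChain_bot_top (m : MaxChain P) : restrictChain m [⊥] ⊤ = m.elems := by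
  unfold restrictChain
  rw [mc_indexOf_top]
  have h0 := mc_len_pos m
  have h1 : m.elems.length - 1 + 1 = m.elems.length := by omega
  rw [h1, List.take_length]
  simp

theorem ascending_iff_restr (lab : MaxChain P → ℕ → Λ) (m : MaxChain P) :
    AscendingMC lab m ↔ RestrAscending lab m 0 (m.elems.length - 1) := by
  have h0 := mc_len_pos m
  constructor
  · intro h k _ hk; exact h k (by omega)
  · intro h i hi; exact h i (Nat.zero_le _) (by omega)

theorem asc_exists (lab : MaxChain P → ℕ → Λ) (hCL : IsCLLabeling lab) :
    ∃ m : MaxChain P, AscendingMC lab m := by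
  rcases eq_or_lt_of_le (bot_le : (⊥ : P) ≤ ⊤) with hbt | hbt
  · refine ⟨⟨[⊥], List.isChain_singleton _, by simp, by simp [hbt]⟩, ?_⟩
    intro i hi
    simp at hi
  · obtain ⟨⟨m₁, hin, hasc⟩, -, -⟩ := hCL.2 [⊥] ⊥ ⊤ ⟨List.isChain_singleton _, by simp, by simp⟩ hbt
    refine ⟨m₁, (ascending_iff_restr lab m₁).mpr ?_⟩
    rw [mc_indexOf_top] at hasc
    simpa using hasc

theorem asc_unique (lab : MaxChain P → ℕ → Λ) (hCL : IsCLLabeling lab) {m m' : MaxChain P}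
    (h : AscendingMC lab m) (h' : AscendingMC lab m') : m = m' := by
  rcases eq_or_lt_of_le (bot_le : (⊥ : P) ≤ ⊤) with hbt | hbt
  · exact mc_ext ((mc_eq_of_bot_eq_top hbt m).trans (mc_eq_of_bot_eq_top hbt m').symm)
  · obtain ⟨-, huniq, -⟩ := hCL.2 [⊥] ⊥ ⊤ ⟨List.isChain_singleton _, by simp, by simp⟩ hbt
    have heq := huniq m m' (mc_inRooted_bot_top m) (mc_inRooted_bot_top m')
      (by rw [mc_indexOf_top]; simpa using (ascending_iff_restr lab m).mp h)
      (by rw [mc_indexOf_top]; simpa using (ascending_iff_restr lab m').mp h')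
    rw [restrictChain_bot_top, restrictChain_bot_top] at heq
    exact mc_ext heq

theorem step_lemma (lab : MaxChain P → ℕ → Λ) (hCL : IsCLLabeling lab)
    (m : MaxChain P) (i : ℕ) (hlen : i + 3 ≤ m.elems.length)
    (hdesc : ¬ lab m i ≤ lab m (i + 1)) :
    ∃ m'' : MaxChain P, PolygonMove lab m'' m ∧
      List.Lex (· < ·) (mcLabels lab m'') (mcLabels lab m) := by
  have hi0 : i < m.elems.length := by omega
  have hi1 : i + 1 < m.elems.length := by omega
  have hi2 : i + 2 < m.elems.length := by omega
  set x := m.elems[i] with hx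
  set z := m.elems[i+1] with hz
  set y := m.elems[i+2] with hy
  set a := m.elems.take i with ha
  set b := m.elems.drop (i+3) with hb
  set r := m.elems.take (i+1) with hr
  have halen : a.length = i := by rw [ha, List.length_take]; omega
  have hrlen : r.length = i + 1 := by rw [hr, List.length_take]; omega
  have hra : r = a ++ [x] := by
    rw [hr, ha, List.take_succ, List.getElem?_eq_getElem hi0]
    rfl
  have hsplit : m.elems = a ++ x :: z :: y :: b := by
    conv_lhs => rw [← List.take_append_drop i m.elems]
    rw [List.drop_eq_getElem_cons hi0, List.drop_eq_getElem_cons hi1,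
      List.drop_eq_getElem_cons hi2]
  have hblen : m.elems.length = i + 3 + b.length := by rw [hb, List.length_drop]; omega
  have hxz : x ⋖ z := mc_cov m hi1
  have hzy : z ⋖ y := mc_cov m hi2
  have hxy : x < y := hxz.lt.trans hzy.lt
  have hrootr : IsRootTo r x := by
    refine ⟨m.chain'.take _, ?_, by rw [hra]; exact List.getLast?_concat⟩
    rw [List.head?_eq_getElem?, hr, List.getElem?_take]
    simp only [if_pos (Nat.succ_pos i)]
    rw [List.getElem?_eq_getElem (by omega : 0 < m.elems.length), mc_getElem_zero m (by omega)]
  obtain ⟨⟨m₁, hm₁in, hm₁asc⟩, huniq, hlex3⟩ := hCL.2 r x y hrootr hxy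
  rw [hrlen] at hm₁asc
  simp only [Nat.add_sub_cancel] at hm₁asc
  have htakem₁ : m₁.elems.take (i+1) = r := by rw [← hrlen]; exact hm₁in.1
  have hym₁ : y ∈ m₁.elems := hm₁in.2
  set idx := m₁.elems.idxOf y with hidx
  have hidxlt : idx < m₁.elems.length := List.idxOf_lt_length_iff.mpr hym₁
  have hm₁y : m₁.elems[idx] = y := List.getElem_idxOf hidxlt
  have hm₁len : i + 1 ≤ m₁.elems.length := by
    have := congrArg List.length htakem₁
    rw [List.length_take, hrlen] at this
    omega
  have hm₁x : ∀ (h : i < m₁.elems.length), m₁.elems[i] = x := by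
    intro h
    have h1 : m₁.elems[i]? = (m₁.elems.take (i+1))[i]? := by
      rw [List.getElem?_take]; simp
    have h2 : (a ++ [x])[i]? = some x := by
      rw [← halen]; exact List.getElem?_concat_length
    rw [htakem₁, hra, h2, List.getElem?_eq_getElem h] at h1
    exact Option.some_injective _ h1
  have hidxgt : i + 2 ≤ idx := by
    rcases Nat.lt_or_ge idx (i+1) with h | h
    · exfalso
      rcases Nat.lt_or_ge idx i with h' | h'
      · have hl := mc_lt m₁ h' (by omega)
        rw [hm₁y, hm₁x (by omega)] at hl
        exact lt_irrefl _ (hxy.trans hl)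
      · have heqi : idx = i := by omega
        have : m₁.elems[idx] = x := by
          simp only [heqi]
          exact hm₁x (by omega)
        rw [hm₁y] at this
        exact hxy.ne this.symm
    · rcases Nat.lt_or_ge idx (i+2) with h' | h'
      · exfalso
        have heqi : idx = i + 1 := by omega
        have hcv := mc_cov m₁ (by omega : i + 1 < m₁.elems.length)
        have hy1 : m₁.elems[i+1]'(by omega) = y := by
          simp only [← heqi]; exact hm₁y
        rw [hm₁x (by omega), hy1] at hcv
        exact hcv.2 hxz.lt hzy.lt
      · exact h'
  set cc := (m₁.elems.take idx).drop (i+1) with hc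
  have hclen : cc.length = idx - (i+1) := by
    rw [hc, List.length_drop, List.length_take]; omega
  have hcne : cc ≠ [] := List.ne_nil_of_length_pos (by omega)
  have htakeidx : m₁.elems.take idx = r ++ cc := by
    conv_lhs => rw [← List.take_append_drop (i+1) (m₁.elems.take idx)]
    rw [List.take_take, min_eq_left (by omega : i + 1 ≤ idx), htakem₁]
  have htakeidx1 : m₁.elems.take (idx+1) = (r ++ cc) ++ [y] := by
    rw [List.take_succ, List.getElem?_eq_getElem hidxlt, hm₁y, htakeidx]
    rfl
  have hc_get : ∀ (j : ℕ), j < cc.length → cc[j]? = m₁.elems[i+1+j]? := by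
    intro j hj
    rw [hc, List.getElem?_drop, List.getElem?_take, if_pos (by omega : i+1+j < idx)]
  have hcontra : ∀ (h1 : i + 1 < m₁.elems.length),
      m₁.elems[i+1] = z → idx = i + 2 → False := by
    intro h1 hz1 h2
    have hcz : cc = [z] := by
      rw [hc, h2, List.take_succ, List.getElem?_eq_getElem h1, hz1, htakem₁]
      rw [show (Option.some z).toList = [z] from rfl]
      exact List.drop_left' (by rw [hrlen])
    have htk3 : m₁.elems.take (i+3) = m.elems.take (i+3) := by
      have e1 : m₁.elems.take (i+3) = (r ++ cc) ++ [y] := by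
        rw [show i + 3 = idx + 1 by omega]; exact htakeidx1
      have halen3 : (a ++ [x, z, y]).length = i + 3 := by
        simp only [List.length_append, List.length_cons, List.length_nil, halen]
      have e2 : m.elems.take (i+3) = a ++ [x, z, y] := by
        rw [hsplit, show a ++ x :: z :: y :: b = (a ++ [x, z, y]) ++ b by simp,
          List.take_append_of_le_length (le_of_eq halen3.symm),
          List.take_of_length_le (le_of_eq halen3)]
      rw [e1, e2, hra, hcz]
      simp
    have hlab := hCL.1 m₁ m (i+2) htk3
    have hle := hm₁asc i le_rfl (by omega)
    rw [hlab i (by omega), hlab (i+1) (by omega)] at hle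
    exact hdesc hle
  have hznotc : z ∉ cc := by
    intro hmem
    obtain ⟨j, hj, hcj⟩ := List.getElem_of_mem hmem
    have hzjq : m₁.elems[i+1+j]? = some z := by
      rw [← hc_get j hj, List.getElem?_eq_getElem hj, hcj]
    obtain ⟨hzjlt, hzj⟩ := List.getElem?_eq_some_iff.mp hzjq
    rcases Nat.eq_zero_or_pos j with rfl | hj0
    · simp only [Nat.add_zero] at hzj hzjq hzjlt
      rcases Nat.eq_or_lt_of_le hidxgt with h2 | h3
      · exact hcontra hzjlt hzj h2.symm
      · -- idx ≥ i + 3 : uniqueness on [z,y] rooted at r' = r ++ [z]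
        set r' := m.elems.take (i+2) with hr'
        have hr'e : r' = r ++ [z] := by
          rw [hr', List.take_succ, List.getElem?_eq_getElem hi1]
          rfl
        have hr'len : r'.length = i + 2 := by rw [hr', List.length_take]; omega
        have hroot' : IsRootTo r' z := by
          refine ⟨m.chain'.take _, ?_, by rw [hr'e]; exact List.getLast?_concat⟩
          rw [List.head?_eq_getElem?, hr', List.getElem?_take]
          simp only [if_pos (by omega : 0 < i + 2)]
          rw [List.getElem?_eq_getElem (by omega : 0 < m.elems.length),
            mc_getElem_zero m (by omega)]
        obtain ⟨-, huniq', -⟩ := hCL.2 r' z y hroot' hzy.lt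
        have hin_m : InRooted m r' y := ⟨by rw [hr'len, ← hr'], hy ▸ List.getElem_mem hi2⟩
        have hin_m₁ : InRooted m₁ r' y := by
          refine ⟨?_, hym₁⟩
          rw [hr'len, List.take_succ, htakem₁, hzjq, hr'e]
          rfl
        have hidxm : m.elems.idxOf y = i + 2 := by rw [hy]; exact mc_indexOf m hi2
        have heq := huniq' m m₁ hin_m hin_m₁ ?_ ?_
        · have hL := congrArg List.length heq
          unfold restrictChain at hL
          rw [hidxm, ← hidx, hr'len] at hL
          simp only [List.length_drop, List.length_take] at hL
          omega
        · rw [hidxm, hr'len]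
          intro k hk1 hk2
          omega
        · rw [← hidx, hr'len]
          intro k hk1 hk2
          exact hm₁asc k (by omega) hk2
    · have hlt1 : x < m₁.elems[i+1]'(by omega) := by
        rw [← hm₁x (by omega)]
        exact mc_lt m₁ (by omega) (by omega)
      have hlt2 : m₁.elems[i+1]'(by omega) < z := by
        rw [← hzj]
        exact mc_lt m₁ (by omega) (by omega)
      exact hxz.2 hlt1 hlt2
  have hin_mr : InRooted m r y := ⟨by rw [hrlen, ← hr], hy ▸ List.getElem_mem hi2⟩
  have hmindexOf : m.elems.idxOf y = i + 2 := by rw [hy]; exact mc_indexOf m hi2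
  have hrcm : restrictChain m r y = [x, z, y] := by
    unfold restrictChain
    rw [hmindexOf, hrlen]
    simp only [Nat.add_sub_cancel]
    have halen3 : (a ++ [x, z, y]).length = i + 3 := by
      simp only [List.length_append, List.length_cons, List.length_nil, halen]
    rw [hsplit, show a ++ x :: z :: y :: b = (a ++ [x, z, y]) ++ b by simp,
      List.take_append_of_le_length (le_of_eq halen3.symm),
      List.take_of_length_le (le_of_eq halen3),
      List.drop_left' halen]
  have hrcm₁ : restrictChain m₁ r y = x :: (cc ++ [y]) := by
    unfold restrictChain
    rw [← hidx, hrlen]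
    simp only [Nat.add_sub_cancel]
    rw [htakeidx1, hra,
      show ((a ++ [x]) ++ cc) ++ [y] = a ++ (x :: (cc ++ [y])) by simp,
      List.drop_left' (by rw [halen])]
  have hrne : restrictChain m₁ r y ≠ restrictChain m r y := by
    rw [hrcm, hrcm₁]
    intro h
    have h2 : cc ++ [y] = [z, y] := by
      have := List.tail_eq_of_cons_eq h
      simpa using this
    have hlc : cc.length = 1 := by
      have := congrArg List.length h2
      simp at this
      omega
    obtain ⟨w, hw⟩ := List.length_eq_one_iff.mp hlc
    rw [hw] at h2
    simp at h2
    rw [h2] at hw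
    refine hznotc ?_
    rw [hw]
    exact List.mem_singleton_self z
  have hm₁asc' : RestrAscending lab m₁ i idx := hm₁asc
  have hlexr := hlex3 m₁ m hm₁in hin_mr (by rw [hrlen, ← hidx]; simpa using hm₁asc) hrne
  rw [hrlen, ← hidx, hmindexOf] at hlexr
  simp only [Nat.add_sub_cancel] at hlexr
  -- build the new chain m''
  have hEeq : m₁.elems.take (idx+1) ++ b = a ++ x :: (cc ++ y :: b) := by
    rw [htakeidx1, hra]
    simp
  have hytop : (y :: b).getLast? = some ⊤ := by
    have hlt := m.last_top
    rw [hsplit, show a ++ x :: z :: y :: b = (a ++ [x, z]) ++ (y :: b) by simp,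
      List.getLast?_append] at hlt
    cases hgl : (y :: b).getLast? with
    | none => exact absurd (List.getLast?_eq_none_iff.mp hgl) (by simp)
    | some w => rw [hgl] at hlt; simpa using hlt
  have hchain : (m₁.elems.take (idx+1) ++ b).Chain' (· ⋖ ·) := by
    show List.IsChain _ _
    rw [List.isChain_append]
    refine ⟨m₁.chain'.take _, by rw [hb]; exact m.chain'.drop _, ?_⟩
    intro u hu v hv
    rw [htakeidx1, List.getLast?_concat] at hu
    simp only [Option.mem_def, Option.some.injEq] at hu
    rw [List.head?_eq_getElem?, hb, List.getElem?_drop] at hv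
    simp only [Nat.add_zero, Option.mem_def] at hv
    obtain ⟨h3, hv3⟩ := List.getElem?_eq_some_iff.mp hv
    subst hu
    subst hv3
    rw [hy]
    exact mc_cov m (show (i+2) + 1 < m.elems.length by omega)
  have hhead : (m₁.elems.take (idx+1) ++ b).head? = some ⊥ := by
    rw [List.head?_append]
    have hl₁ : (m₁.elems.take (idx+1)).head? = some ⊥ := by
      rw [List.head?_eq_getElem?, List.getElem?_take, if_pos (Nat.succ_pos idx),
        ← List.head?_eq_getElem?]
      exact m₁.head_bot
    rw [hl₁]
    rfl
  have hlast : (m₁.elems.take (idx+1) ++ b).getLast? = some ⊤ := by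
    rw [hEeq, show a ++ x :: (cc ++ y :: b) = (a ++ x :: cc) ++ (y :: b) by simp,
      List.getLast?_append, hytop]
    rfl
  set m'' : MaxChain P := ⟨m₁.elems.take (idx+1) ++ b, hchain, hhead, hlast⟩ with hm''
  have hm''e : m''.elems = m₁.elems.take (idx+1) ++ b := rfl
  have htakeE : m''.elems.take (idx+1) = m₁.elems.take (idx+1) := by
    rw [hm''e]
    exact List.take_left' (by rw [List.length_take]; omega)
  have hlabE : ∀ j, j < idx → lab m'' j = lab m₁ j := hCL.1 m'' m₁ idx htakeE
  refine ⟨m'', ?_, ?_⟩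
  · -- PolygonMove
    refine ⟨a, cc, b, x, z, y, hm''e.trans hEeq, hsplit, hcne, hznotc, ?_, ?_⟩
    · have hacl : a.length + cc.length + 1 = idx := by omega
      rw [hacl, halen]
      intro k hk1 hk2
      rw [hlabE k (by omega), hlabE (k+1) (by omega)]
      exact hm₁asc' k hk1 hk2
    · rw [halen]
      exact hdesc
  · -- Lex
    have hnE : m''.elems.length - 1 = i + (idx - i) + b.length := by
      rw [hm''e, List.length_append, List.length_take]
      omega
    have hnm : m.elems.length - 1 = i + 2 + b.length := by omega
    unfold mcLabels
    rw [hnE, hnm, map_range_split, map_range_split]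
    have hlabP : ∀ j, j < i → lab m'' j = lab m j := by
      intro j hj
      refine hCL.1 m'' m i ?_ j hj
      have h1 : m''.elems.take (i+1) = m₁.elems.take (i+1) := by
        calc m''.elems.take (i+1) = (m''.elems.take (idx+1)).take (i+1) := by
              rw [List.take_take, min_eq_left (by omega)]
          _ = (m₁.elems.take (idx+1)).take (i+1) := by rw [htakeE]
          _ = m₁.elems.take (i+1) := by
              rw [List.take_take, min_eq_left (by omega)]
      rw [h1, htakem₁, hr]
    have hP : (List.range i).map (lab m'') = (List.range i).map (lab m) := by
      apply List.map_congr_left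
      intro k hk
      exact hlabP k (List.mem_range.mp hk)
    rw [hP]
    apply lex_append_left
    have hS1 : (List.range (idx - i)).map (fun k => lab m'' (i + k)) =
        restrLabels lab m₁ i idx := by
      unfold restrLabels
      apply List.map_congr_left
      intro k hk
      exact hlabE (i + k) (by have := List.mem_range.mp hk; omega)
    have hS2 : restrLabels lab m i (i + 2) =
        (List.range 2).map (fun k => lab m (i + k)) := by
      unfold restrLabels
      simp
    rw [hS1]
    apply lex_append_of_length_le (hS2 ▸ hlexr)
    · unfold restrLabels
      simp
      omega

end Aux

/-- the maximal chain descent order of a finite bounded poset with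
a CL-labeling has a unique minimal element, namely the unique ascending maximal
chain: there is a unique ascending maximal chain, and it lies below every
maximal chain in `C(P,λ)`. -/
theorem statement1 [Fintype P] (lab : MaxChain P → ℕ → Λ) (hCL : IsCLLabeling lab) :
    (∃! m₀ : MaxChain P, AscendingMC lab m₀) ∧
      ∀ m₀ : MaxChain P, AscendingMC lab m₀ →
        ∀ m : MaxChain P, CDLe lab m₀ m := by
  obtain ⟨mz, hz⟩ := asc_exists lab hCL
  have huniq : ∀ m : MaxChain P, AscendingMC lab m → m = mz :=
    fun m hm => asc_unique lab hCL hm hz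
  have key : ∀ m₀ : MaxChain P, AscendingMC lab m₀ → ∀ m : MaxChain P, CDLe lab m₀ m := by
    intro m₀ h₀
    haveI : Finite (MaxChain P) := mc_finite
    haveI : IsTrans (MaxChain P)
        (fun u v => List.Lex (· < ·) (mcLabels lab u) (mcLabels lab v)) :=
      ⟨fun _ _ _ h1 h2 => lexLt_trans h1 h2⟩
    haveI : IsIrrefl (MaxChain P)
        (fun u v => List.Lex (· < ·) (mcLabels lab u) (mcLabels lab v)) :=
      ⟨fun u h => lexLt_irrefl _ h⟩
    have wf := Finite.wellFounded_of_trans_of_irrefl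
      (fun u v : MaxChain P => List.Lex (· < ·) (mcLabels lab u) (mcLabels lab v))
    intro m
    induction m using WellFounded.induction wf with
    | _ m ih =>
      by_cases hma : AscendingMC lab m
      · rw [(huniq m hma).trans (huniq m₀ h₀).symm]
        exact Relation.ReflTransGen.refl
      · rw [AscendingMC] at hma
        push_neg at hma
        obtain ⟨i, hi, hd⟩ := hma
        obtain ⟨m'', hpm, hlx⟩ := step_lemma lab hCL m i hi hd
        exact Relation.ReflTransGen.tail (ih m'' hlx) hpm
  exact ⟨⟨mz, hz, huniq⟩, key⟩
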